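/- Let ℓ : ℝ × ℝ → ℝ be of the form ℓ(x, y) = g(x) + y·h(x) with g, h twice continuously differentiable and bounded second derivatives (|g''| ≤ M, |h''| ≤ M, and labels bounded |y| ≤ 1). Then for all x_i, x_j, y_i, y_j with |y_i|, |y_j| ≤ 1 and λ ∈ [0,1], the difference between the global Mixup loss ℓ((1-λ)x_i + λx_j, (1-λ)y_i + λy_j) and the FedMix surrogate (1-λ)·ℓ((1-λ)x_i, y_i) + λ·ℓ((1-λ)x_i, y_j) + λ·∂_xℓ((1-λ)x_i, y_i)·x_j is bounded in absolute value by C·λ²·(1 + x_j² + |x_j|) for some constant C depending only on M and a bound on |h'| near (1-λ)x_i. -/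

import Mathlib

/-!
Write `a = (1 - λ) xᵢ`, `t = λ xⱼ` and `ȳ = (1 - λ) yᵢ + λ yⱼ`, so that the Mixup loss is
`ℓ(a + t, ȳ)`. Because the loss is linear in the label, the Mixup loss minus the surrogate is
exactly `R_g + ȳ R_h + λ (yⱼ - yᵢ) h'(a) t`, where `R_f = f (a + t) - f a - f'(a) t` is the
first-order Taylor remainder. Each remainder is at most `M t² = M λ² xⱼ²`, `|ȳ| ≤ 1`, and the
last term is at most `2 H λ² |xⱼ|`.
-/

open Set

theorem abs_sub_sub_deriv_mul_le_of_abs_deriv_sub_le {f : ℝ → ℝ} {M : ℝ}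
    (hf : Differentiable ℝ f)
    (hlip : ∀ x y, |deriv f x - deriv f y| ≤ M * |x - y|) (a t : ℝ) :
    |f (a + t) - f a - deriv f a * t| ≤ M * t ^ 2 := by
  set φ : ℝ → ℝ := fun s => f (a + s) - deriv f a * s
  have hφ : ∀ s, HasDerivAt φ (deriv f (a + s) - deriv f a) s := fun s =>
    (((hf (a + s)).hasDerivAt.comp_const_add a s).sub ((hasDerivAt_id s).const_mul _)).congr_deriv
      (by simp)
  have bound : ∀ s ∈ uIcc 0 t, ‖deriv f (a + s) - deriv f a‖ ≤ M * |t| := fun s hs => by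
    have hst : |s| ≤ |t| := by simpa using abs_sub_left_of_mem_uIcc hs
    have hM : 0 ≤ M := nonneg_of_mul_nonneg_left ((abs_nonneg _).trans (hlip 1 0)) (by simp)
    calc ‖deriv f (a + s) - deriv f a‖ ≤ M * |a + s - a| := hlip _ _
      _ ≤ M * |t| := by simpa using mul_le_mul_of_nonneg_left hst hM
  have := (convex_uIcc 0 t).norm_image_sub_le_of_norm_hasDerivWithin_le
    (fun s _ => (hφ s).hasDerivWithinAt) bound left_mem_uIcc right_mem_uIcc
  calc |f (a + t) - f a - deriv f a * t| = ‖φ t - φ 0‖ := by simp [φ, sub_right_comm]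
    _ ≤ M * |t| * ‖t - 0‖ := this
    _ = M * t ^ 2 := by rw [sub_zero, Real.norm_eq_abs, mul_assoc, ← abs_mul, ← sq, abs_sq]

theorem ContDiff.abs_sub_sub_deriv_mul_le {f : ℝ → ℝ} {M : ℝ} (hf : ContDiff ℝ 2 f)
    (hM : ∀ x, |iteratedDeriv 2 f x| ≤ M) (a t : ℝ) :
    |f (a + t) - f a - deriv f a * t| ≤ M * t ^ 2 := by
  have hf' : Differentiable ℝ (deriv f) :=
    ((contDiff_succ_iff_deriv (n := 1)).mp hf).2.2.differentiable one_ne_zero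
  refine abs_sub_sub_deriv_mul_le_of_abs_deriv_sub_le (hf.differentiable two_ne_zero)
    (fun x y => ?_) a t
  simpa using convex_univ.norm_image_sub_le_of_norm_deriv_le (fun z _ => hf' z)
    (fun z _ => by simpa [iteratedDeriv_eq_iterate] using hM z) (mem_univ y) (mem_univ x)

/-- Quantitative O(λ²) error bound for the FedMix surrogate of the global Mixup loss. -/
theorem fedmix_surrogate_error_bound (g h : ℝ → ℝ) (M H : ℝ)
    (hg : ContDiff ℝ 2 g) (hh : ContDiff ℝ 2 h)
    (hg'' : ∀ x, |iteratedDeriv 2 g x| ≤ M) (hh'' : ∀ x, |iteratedDeriv 2 h x| ≤ M)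
    (hh' : ∀ x, |deriv h x| ≤ H) :
    ∃ C : ℝ, 0 ≤ C ∧
      ∀ xi xj yi yj lam : ℝ, |yi| ≤ 1 → |yj| ≤ 1 → 0 ≤ lam → lam ≤ 1 →
        |(g ((1 - lam) * xi + lam * xj)
              + ((1 - lam) * yi + lam * yj) * h ((1 - lam) * xi + lam * xj))
            - ((1 - lam) * (g ((1 - lam) * xi) + yi * h ((1 - lam) * xi))
              + lam * (g ((1 - lam) * xi) + yj * h ((1 - lam) * xi))
              + lam * (deriv g ((1 - lam) * xi) + yi * deriv h ((1 - lam) * xi)) * xj)|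
          ≤ C * lam ^ 2 * (1 + xj ^ 2 + |xj|) := by
  have hM : 0 ≤ M := (abs_nonneg _).trans (hg'' 0)
  have hH : 0 ≤ H := (abs_nonneg _).trans (hh' 0)
  refine ⟨2 * M + 2 * H, by positivity, fun xi xj yi yj lam hyi hyj hl0 hl1 => ?_⟩
  set a := (1 - lam) * xi
  set ybar := (1 - lam) * yi + lam * yj
  have hybar : |ybar| ≤ 1 := abs_le.2 <|
    convex_Icc (-1 : ℝ) 1 (abs_le.1 hyi) (abs_le.1 hyj) (sub_nonneg.2 hl1) hl0 (by ring)
  have hRg := hg.abs_sub_sub_deriv_mul_le hg'' a (lam * xj)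
  have hRh := hh.abs_sub_sub_deriv_mul_le hh'' a (lam * xj)
  have hcross : |lam * (yj - yi) * deriv h a * (lam * xj)| ≤ lam ^ 2 * (2 * H) * |xj| := by
    have hy : |yj - yi| ≤ 2 := (abs_sub _ _).trans (by linarith)
    rw [abs_mul, abs_mul, abs_mul, abs_mul, abs_of_nonneg hl0]
    calc lam * |yj - yi| * |deriv h a| * (lam * |xj|)
        = lam ^ 2 * (|yj - yi| * |deriv h a|) * |xj| := by ring
      _ ≤ lam ^ 2 * (2 * H) * |xj| := by gcongr; exact hh' a
  have hdecomp : (g (a + lam * xj) + ybar * h (a + lam * xj))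
        - ((1 - lam) * (g a + yi * h a) + lam * (g a + yj * h a)
          + lam * (deriv g a + yi * deriv h a) * xj)
      = (g (a + lam * xj) - g a - deriv g a * (lam * xj))
        + ybar * (h (a + lam * xj) - h a - deriv h a * (lam * xj))
        + lam * (yj - yi) * deriv h a * (lam * xj) := by ring
  rw [hdecomp]
  calc _ ≤ M * (lam * xj) ^ 2 + 1 * (M * (lam * xj) ^ 2) + lam ^ 2 * (2 * H) * |xj| := by
        refine (abs_add_le _ _).trans <|
          add_le_add ((abs_add_le _ _).trans (add_le_add hRg ?_)) hcross
        rw [abs_mul]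
        exact mul_le_mul hybar hRh (abs_nonneg _) zero_le_one
    _ ≤ (2 * M + 2 * H) * lam ^ 2 * (1 + xj ^ 2 + |xj|) := by
        have : 0 ≤ lam ^ 2 * (2 * M * (1 + |xj|) + 2 * H * (1 + xj ^ 2)) := by positivity
        nlinarith
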